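/- Let (F_t)_{t=1}^{T} be a filtration on a probability space with T ≥ 2, and let B > 0. For each t = 2, …, T, let a_t ∈ R^m be an F_{t−1}-measurable random vector with ‖a_t‖₂ = 1 almost surely, let x_t ∈ R^n be a random vector with ‖x_t‖₂² ≤ B almost surely, and let ε_t be a real random variable, with x_t, ε_t both F_t-measurable, such that conditionally on the σ-algebra generated by F_{t−1} and x_t, the variable ε_t has the standard normal distribution N(0,1). Define W_T = Σ_{t=2}^{T} ε_t x_t a_tᵀ ∈ R^{n×m}. Then for every s > 0, P( ‖W_T‖_F ≥ s ) ≤ T · exp( −s² / (2TB) ). -/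

import Mathlib

/-!
Let `W_k` be the partial sums, so that `W_{k+1} = W_k + ε_{k+1} D_{k+1}` with
`D = x aᵀ`, `‖D‖_F² ≤ B`, and `W_k`, `D_{k+1}` measurable with respect to `F_k ∨ σ(x_{k+1})`,
of which `ε_{k+1}` is independent. For `y ~ N(0,1)` the integral of
`exp (λ ‖w + y d‖²) = exp (λ‖w‖² + 2λ⟪w,d⟫ y + λ‖d‖² y²)` is an explicit Gaussian integral, and
Cauchy–Schwarz `⟪w,d⟫² ≤ ‖w‖²‖d‖²` bounds it, for `λ = 1 / (2B(k+2))`, by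
`√((k+2)/(k+1)) exp (‖w‖² / (2B(k+1)))`. Integrating out `ε_{k+1}` first, these factors
telescope to `E exp (‖W_T‖_F² / (2BT)) ≤ √T`, and the Chernoff bound gives
`P(‖W_T‖_F ≥ s) ≤ √T exp (-s² / (2BT))`.
-/

open MeasureTheory ProbabilityTheory Finset
open scoped ENNReal

lemma gaussianPDFReal_mul_exp_quadratic {α : ℝ} (hα : 2 * α < 1) (β y : ℝ) :
    gaussianPDFReal 0 1 y * Real.exp (α * y ^ 2 + β * y) =
      (Real.sqrt (1 - 2 * α))⁻¹ * Real.exp (β ^ 2 / (2 * (1 - 2 * α))) *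
        gaussianPDFReal (β / (1 - 2 * α)) (1 - 2 * α)⁻¹.toNNReal y := by
  have hγ : 0 < 1 - 2 * α := by linarith
  have hsqrt : Real.sqrt (2 * Real.pi * (1 - 2 * α)⁻¹) =
      Real.sqrt (2 * Real.pi) / Real.sqrt (1 - 2 * α) := by
    rw [← div_eq_mul_inv, Real.sqrt_div' _ hγ.le]
  -- completing the square
  have hexp : -y ^ 2 / 2 + (α * y ^ 2 + β * y) =
      β ^ 2 / (2 * (1 - 2 * α)) + -(y - β / (1 - 2 * α)) ^ 2 / (2 * (1 - 2 * α)⁻¹) := by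
    field_simp
    ring
  have hsqrt_ne : Real.sqrt (1 - 2 * α) ≠ 0 := (Real.sqrt_pos.2 hγ).ne'
  simp only [gaussianPDFReal, NNReal.coe_one, mul_one, sub_zero,
    Real.coe_toNNReal _ (inv_pos.2 hγ).le, hsqrt, inv_div]
  rw [mul_assoc, ← Real.exp_add, hexp, Real.exp_add]
  field_simp

lemma lintegral_exp_quadratic_gaussianReal {α : ℝ} (hα : 2 * α < 1) (β : ℝ) :
    ∫⁻ y, ENNReal.ofReal (Real.exp (α * y ^ 2 + β * y)) ∂gaussianReal 0 1 =
      ENNReal.ofReal ((Real.sqrt (1 - 2 * α))⁻¹ * Real.exp (β ^ 2 / (2 * (1 - 2 * α)))) := by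
  have hv : (1 - 2 * α)⁻¹.toNNReal ≠ 0 := by
    simp only [ne_eq, Real.toNNReal_eq_zero, not_le, inv_pos]; linarith
  rw [gaussianReal_of_var_ne_zero _ one_ne_zero,
    lintegral_withDensity_eq_lintegral_mul _ (measurable_gaussianPDF 0 1) (by fun_prop)]
  simp only [Pi.mul_apply, gaussianPDF, ← ENNReal.ofReal_mul (gaussianPDFReal_nonneg _ _ _),
    gaussianPDFReal_mul_exp_quadratic hα, ENNReal.ofReal_mul (by positivity :
      (0:ℝ) ≤ (Real.sqrt (1 - 2 * α))⁻¹ * Real.exp (β ^ 2 / (2 * (1 - 2 * α))))]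
  rw [lintegral_const_mul _ (measurable_gaussianPDFReal _ _).ennreal_ofReal,
    lintegral_gaussianPDFReal_eq_one _ hv, mul_one]

lemma add_sq_div_le_div_one_sub {L q v c : ℝ} (hv : v ^ 2 ≤ q * c) (hc : 2 * L * c < 1) :
    L * q + (2 * L * v) ^ 2 / (2 * (1 - 2 * L * c)) ≤ L * q / (1 - 2 * L * c) := by
  have hγ : 1 - 2 * L * c ≠ 0 := by linarith
  calc L * q + (2 * L * v) ^ 2 / (2 * (1 - 2 * L * c))
      ≤ L * q + (2 * L) ^ 2 * (q * c) / (2 * (1 - 2 * L * c)) := by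
        rw [mul_pow (2 * L)]; gcongr
    _ = L * q / (1 - 2 * L * c) := by
        rw [eq_div_iff hγ, add_mul, div_mul_eq_mul_div, mul_div_mul_right _ _ hγ]; ring

lemma inv_sqrt_mul_exp_le {L q v c r : ℝ} (hL : 0 ≤ L) (hq : 0 ≤ q) (hv : v ^ 2 ≤ q * c)
    (hr : 0 < r) (hrc : r ≤ 1 - 2 * L * c) :
    (Real.sqrt (1 - 2 * L * c))⁻¹ * Real.exp (L * q + (2 * L * v) ^ 2 / (2 * (1 - 2 * L * c))) ≤
      (Real.sqrt r)⁻¹ * Real.exp (L * q / r) := by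
  gcongr ?_ * Real.exp ?_
  · exact inv_anti₀ (Real.sqrt_pos.2 hr) (Real.sqrt_le_sqrt hrc)
  · exact (add_sq_div_le_div_one_sub hv (by linarith)).trans
      (div_le_div_of_nonneg_left (by positivity) hr hrc)

lemma lintegral_comp_eq_lintegral_lintegral_of_indep {Ω α β : Type*} {𝒢 mΩ : MeasurableSpace Ω}
    [MeasurableSpace α] [MeasurableSpace β] {P : Measure Ω} [IsFiniteMeasure P]
    (h𝒢 : 𝒢 ≤ mΩ) {η : Ω → α} {Z : Ω → β} (hη : AEMeasurable η P)
    (hZ : Measurable[𝒢] Z) (hind : Indep (MeasurableSpace.comap η inferInstance) 𝒢 P)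
    {f : α × β → ℝ≥0∞} (hf : Measurable f) :
    ∫⁻ ω, f (η ω, Z ω) ∂P = ∫⁻ ω, ∫⁻ y, f (y, Z ω) ∂(P.map η) ∂P := by
  have hZm : Measurable Z := hZ.mono h𝒢 le_rfl
  have hindep : IndepFun η Z P := by
    rw [IndepFun_iff_Indep]
    exact indep_of_indep_of_le_right hind (measurable_iff_comap_le.mp hZ)
  rw [← lintegral_map' hf.aemeasurable (hη.prodMk hZm.aemeasurable),
    (indepFun_iff_map_prod_eq_prod_map_map hη hZm.aemeasurable).mp hindep,
    lintegral_prod_symm' f hf, lintegral_map hf.lintegral_prod_left' hZm]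

lemma measure_le_norm_le_exp_mul_lintegral {Ω E : Type*} {mΩ : MeasurableSpace Ω}
    {P : Measure Ω} [NormedAddCommGroup E] [MeasurableSpace E] [OpensMeasurableSpace E]
    {X : Ω → E} (hX : AEMeasurable X P) {s c : ℝ} (hs : 0 ≤ s) (hc : 0 ≤ c) :
    P {ω | s ≤ ‖X ω‖} ≤ ENNReal.ofReal (Real.exp (-(s ^ 2 / c))) *
      ∫⁻ ω, ENNReal.ofReal (Real.exp (‖X ω‖ ^ 2 / c)) ∂P := by
  calc P {ω | s ≤ ‖X ω‖}
      ≤ P {ω | ENNReal.ofReal (Real.exp (s ^ 2 / c)) ≤ ENNReal.ofReal (Real.exp (‖X ω‖ ^ 2 / c))} :=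
        measure_mono fun ω (hω : s ≤ ‖X ω‖) => by
          change ENNReal.ofReal _ ≤ ENNReal.ofReal _; gcongr
    _ ≤ (∫⁻ ω, ENNReal.ofReal (Real.exp (‖X ω‖ ^ 2 / c)) ∂P) /
          ENNReal.ofReal (Real.exp (s ^ 2 / c)) :=
        meas_ge_le_lintegral_div (by fun_prop) (by simp [Real.exp_pos]) ENNReal.ofReal_ne_top
    _ = _ := by
        rw [ENNReal.div_eq_inv_mul, ← ENNReal.ofReal_inv_of_pos (Real.exp_pos _), Real.exp_neg]

section InnerProductSpace

open scoped RealInnerProductSpace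

variable {E : Type*} [NormedAddCommGroup E] [InnerProductSpace ℝ E]

lemma norm_add_smul_sq (w d : E) (y : ℝ) :
    ‖w + y • d‖ ^ 2 = ‖w‖ ^ 2 + 2 * y * ⟪w, d⟫ + y ^ 2 * ‖d‖ ^ 2 := by
  rw [norm_add_sq_real, inner_smul_right, norm_smul, mul_pow, Real.norm_eq_abs, sq_abs]; ring

lemma lintegral_exp_norm_add_smul_sq_le {B : ℝ} (hB : 0 < B) (k : ℕ) (w d : E)
    (hd : ‖d‖ ^ 2 ≤ B) :
    ∫⁻ y, ENNReal.ofReal (Real.exp (‖w + y • d‖ ^ 2 / (2 * B * (k + 2)))) ∂gaussianReal 0 1 ≤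
      ENNReal.ofReal (Real.sqrt ((k + 2) / (k + 1))) *
        ENNReal.ofReal (Real.exp (‖w‖ ^ 2 / (2 * B * (k + 1)))) := by
  set L := (2 * B * (k + 2))⁻¹ with hL
  have hr0 : (0 : ℝ) < (k + 1) / (k + 2) := by positivity
  have hr : (k + 1) / (k + 2) ≤ 1 - 2 * L * ‖d‖ ^ 2 := by
    have : 2 * L * ‖d‖ ^ 2 ≤ 2 * L * B := by gcongr
    have : 2 * L * B = 1 - (k + 1) / (k + 2) := by rw [hL]; field_simp; ring
    linarith
  have hcs : ⟪w, d⟫ ^ 2 ≤ ‖w‖ ^ 2 * ‖d‖ ^ 2 := by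
    rw [← mul_pow, ← sq_abs]
    exact pow_le_pow_left₀ (abs_nonneg _) (abs_real_inner_le_norm w d) 2
  calc ∫⁻ y, ENNReal.ofReal (Real.exp (‖w + y • d‖ ^ 2 / (2 * B * (k + 2)))) ∂gaussianReal 0 1
      = ENNReal.ofReal (Real.exp (L * ‖w‖ ^ 2)) * ∫⁻ y, ENNReal.ofReal
          (Real.exp ((L * ‖d‖ ^ 2) * y ^ 2 + (2 * L * ⟪w, d⟫) * y)) ∂gaussianReal 0 1 := by
        rw [← lintegral_const_mul _ (by fun_prop)]
        refine lintegral_congr fun y => ?_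
        rw [← ENNReal.ofReal_mul (Real.exp_nonneg _), ← Real.exp_add, norm_add_smul_sq,
          div_eq_mul_inv, ← hL]
        congr 2; ring
    _ = ENNReal.ofReal ((Real.sqrt (1 - 2 * L * ‖d‖ ^ 2))⁻¹ *
          Real.exp (L * ‖w‖ ^ 2 + (2 * L * ⟪w, d⟫) ^ 2 / (2 * (1 - 2 * L * ‖d‖ ^ 2)))) := by
        rw [lintegral_exp_quadratic_gaussianReal (by linarith),
          ← ENNReal.ofReal_mul (Real.exp_nonneg _), Real.exp_add]
        congr 1
        ring_nf
    _ ≤ ENNReal.ofReal ((Real.sqrt ((k + 1) / (k + 2)))⁻¹ *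
          Real.exp (L * ‖w‖ ^ 2 / ((k + 1) / (k + 2)))) :=
        ENNReal.ofReal_le_ofReal (inv_sqrt_mul_exp_le (by positivity) (by positivity) hcs hr0 hr)
    _ = _ := by
        rw [← Real.sqrt_inv, inv_div, ← ENNReal.ofReal_mul (Real.sqrt_nonneg _), hL]
        congr 3
        field_simp

variable [MeasurableSpace E] [BorelSpace E] [SecondCountableTopology E]

lemma lintegral_exp_norm_add_smul_sq_le_of_indep {Ω : Type*} {𝒢 mΩ : MeasurableSpace Ω}
    {P : Measure Ω} [IsFiniteMeasure P] (h𝒢 : 𝒢 ≤ mΩ) {η : Ω → ℝ} {W D : Ω → E}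
    (hW : Measurable[𝒢] W) (hD : Measurable[𝒢] D) (hη_law : P.map η = gaussianReal 0 1)
    (hη_indep : Indep (MeasurableSpace.comap η inferInstance) 𝒢 P) {B : ℝ} (hB : 0 < B)
    (hD_bound : ∀ᵐ ω ∂P, ‖D ω‖ ^ 2 ≤ B) (k : ℕ) :
    ∫⁻ ω, ENNReal.ofReal (Real.exp (‖W ω + η ω • D ω‖ ^ 2 / (2 * B * (k + 2)))) ∂P ≤
      ENNReal.ofReal (Real.sqrt ((k + 2) / (k + 1))) *
        ∫⁻ ω, ENNReal.ofReal (Real.exp (‖W ω‖ ^ 2 / (2 * B * (k + 1)))) ∂P := by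
  have hη : AEMeasurable η P :=
    AEMeasurable.of_map_ne_zero (hη_law ▸ IsProbabilityMeasure.ne_zero _)
  have hWm : Measurable W := hW.mono h𝒢 le_rfl
  rw [lintegral_comp_eq_lintegral_lintegral_of_indep h𝒢 hη (hW.prodMk hD) hη_indep
    (f := fun p : ℝ × E × E =>
      ENNReal.ofReal (Real.exp (‖p.2.1 + p.1 • p.2.2‖ ^ 2 / (2 * B * (k + 2)))))
    (by fun_prop), hη_law, ← lintegral_const_mul _ (by fun_prop)]
  refine lintegral_mono_ae (hD_bound.mono fun ω hω => ?_)
  exact lintegral_exp_norm_add_smul_sq_le hB k _ _ hω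

theorem lintegral_exp_norm_sq_le_sqrt {Ω : Type*} {mΩ : MeasurableSpace Ω} {P : Measure Ω}
    [IsProbabilityMeasure P] {𝒢 : ℕ → MeasurableSpace Ω} {η : ℕ → Ω → ℝ} {W D : ℕ → Ω → E}
    {B : ℝ} (hB : 0 < B) (N : ℕ) (h𝒢 : ∀ k < N, 𝒢 k ≤ mΩ)
    (hW : ∀ k < N, Measurable[𝒢 k] (W k)) (hD : ∀ k < N, Measurable[𝒢 k] (D k))
    (hη_law : ∀ k < N, P.map (η k) = gaussianReal 0 1)
    (hη_indep : ∀ k < N, Indep (MeasurableSpace.comap (η k) inferInstance) (𝒢 k) P)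
    (hD_bound : ∀ k < N, ∀ᵐ ω ∂P, ‖D k ω‖ ^ 2 ≤ B)
    (hW_zero : ∀ ω, W 0 ω = 0) (hW_succ : ∀ k < N, ∀ ω, W (k + 1) ω = W k ω + η k ω • D k ω) :
    ∫⁻ ω, ENNReal.ofReal (Real.exp (‖W N ω‖ ^ 2 / (2 * B * (N + 1)))) ∂P ≤
      ENNReal.ofReal (Real.sqrt (N + 1)) := by
  suffices ∀ j ≤ N, ∫⁻ ω, ENNReal.ofReal (Real.exp (‖W j ω‖ ^ 2 / (2 * B * (j + 1)))) ∂P ≤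
      ENNReal.ofReal (Real.sqrt (j + 1)) from this N le_rfl
  intro j hj
  induction j with
  | zero => simp [hW_zero]
  | succ j ih =>
    have hj' : j < N := hj
    calc ∫⁻ ω, ENNReal.ofReal (Real.exp (‖W (j + 1) ω‖ ^ 2 / (2 * B * ((j + 1 : ℕ) + 1)))) ∂P
        = ∫⁻ ω, ENNReal.ofReal
            (Real.exp (‖W j ω + η j ω • D j ω‖ ^ 2 / (2 * B * (j + 2)))) ∂P := by
          simp_rw [hW_succ j hj', Nat.cast_succ, add_assoc, one_add_one_eq_two]
      _ ≤ ENNReal.ofReal (Real.sqrt ((j + 2) / (j + 1))) *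
            ∫⁻ ω, ENNReal.ofReal (Real.exp (‖W j ω‖ ^ 2 / (2 * B * (j + 1)))) ∂P :=
          lintegral_exp_norm_add_smul_sq_le_of_indep (h𝒢 j hj') (hW j hj') (hD j hj')
            (hη_law j hj') (hη_indep j hj') hB (hD_bound j hj') j
      _ ≤ ENNReal.ofReal (Real.sqrt ((j + 2) / (j + 1))) *
            ENNReal.ofReal (Real.sqrt (j + 1)) := by
          gcongr; exact ih hj'.le
      _ = ENNReal.ofReal (Real.sqrt ((j + 1 : ℕ) + 1)) := by
          rw [← ENNReal.ofReal_mul (Real.sqrt_nonneg _), ← Real.sqrt_mul (by positivity),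
            div_mul_cancel₀ _ (by positivity)]
          push_cast; ring_nf

end InnerProductSpace

-- The matrix `u vᵀ`, flattened so that its Euclidean norm is the Frobenius norm.
def outerProduct {ι κ : Type*} (u : ι → ℝ) (v : κ → ℝ) : EuclideanSpace ℝ (ι × κ) :=
  WithLp.toLp 2 fun p => u p.1 * v p.2

lemma EuclideanSpace.norm_eq_sqrt_sum_sum_sq {ι κ : Type*} [Fintype ι] [Fintype κ]
    (M : EuclideanSpace ℝ (ι × κ)) : ‖M‖ = Real.sqrt (∑ i, ∑ j, M (i, j) ^ 2) := by
  simp [EuclideanSpace.norm_eq, Fintype.sum_prod_type]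

lemma norm_outerProduct_sq {ι κ : Type*} [Fintype ι] [Fintype κ] (u : ι → ℝ) (v : κ → ℝ) :
    ‖outerProduct u v‖ ^ 2 = (∑ i, u i ^ 2) * ∑ j, v j ^ 2 := by
  rw [EuclideanSpace.norm_eq_sqrt_sum_sum_sq, Real.sq_sqrt (by positivity), Finset.sum_mul_sum]
  simp [outerProduct, mul_pow]

lemma measurable_outerProduct {Ω ι κ : Type*} {mΩ : MeasurableSpace Ω}
    {u : Ω → ι → ℝ} {v : Ω → κ → ℝ} (hu : Measurable u) (hv : Measurable v) :
    Measurable fun ω => outerProduct (u ω) (v ω) := by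
  unfold outerProduct; fun_prop

-- `W_{k+1} = Σ_{t=2}^{k+1} ε_t x_t a_tᵀ`, the sum of the first `k` increments.
def outerProductSum {Ω ι κ : Type*} (ε : ℕ → Ω → ℝ) (x : ℕ → Ω → ι → ℝ) (a : ℕ → Ω → κ → ℝ)
    (k : ℕ) (ω : Ω) : EuclideanSpace ℝ (ι × κ) :=
  ∑ t ∈ Icc 2 (k + 1), ε t ω • outerProduct (x t ω) (a t ω)

lemma norm_outerProductSum {Ω ι κ : Type*} [Fintype ι] [Fintype κ] (ε : ℕ → Ω → ℝ)
    (x : ℕ → Ω → ι → ℝ) (a : ℕ → Ω → κ → ℝ) (k : ℕ) (ω : Ω) :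
    ‖outerProductSum ε x a k ω‖ =
      Real.sqrt (∑ i, ∑ j, (∑ t ∈ Icc 2 (k + 1), ε t ω * x t ω i * a t ω j) ^ 2) := by
  simp [EuclideanSpace.norm_eq_sqrt_sum_sum_sq, outerProductSum, outerProduct, mul_assoc]

lemma measurable_outerProductSum {Ω ι κ : Type*} [Fintype ι] [Fintype κ]
    {mΩ : MeasurableSpace Ω} {ℱ : Filtration ℕ mΩ} {ε : ℕ → Ω → ℝ} {x : ℕ → Ω → ι → ℝ} {a : ℕ → Ω → κ → ℝ} {k : ℕ}
    (hε : ∀ t, 2 ≤ t → t ≤ k + 1 → Measurable[ℱ t] (ε t))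
    (hx : ∀ t, 2 ≤ t → t ≤ k + 1 → Measurable[ℱ t] (x t))
    (ha : ∀ t, 2 ≤ t → t ≤ k + 1 → Measurable[ℱ (t - 1)] (a t)) :
    Measurable[ℱ (k + 1)] (outerProductSum ε x a k) :=
  Finset.measurable_sum _ fun t ht => by
    obtain ⟨h2t, htk⟩ := Finset.mem_Icc.mp ht
    exact ((hε t h2t htk).mono (ℱ.mono htk) le_rfl).smul
      (measurable_outerProduct ((hx t h2t htk).mono (ℱ.mono htk) le_rfl)
        ((ha t h2t htk).mono (ℱ.mono (by omega)) le_rfl))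

theorem lintegral_exp_norm_outerProductSum_sq_le {Ω ι κ : Type*} [Fintype ι] [Fintype κ]
    {mΩ : MeasurableSpace Ω} {P : Measure Ω} [IsProbabilityMeasure P] (N : ℕ) {B : ℝ}
    (hB : 0 < B) (ℱ : Filtration ℕ mΩ)
    {a : ℕ → Ω → κ → ℝ} {x : ℕ → Ω → ι → ℝ} {ε : ℕ → Ω → ℝ}
    (ha_meas : ∀ t, 2 ≤ t → t ≤ N + 1 → Measurable[ℱ (t - 1)] (a t))
    (ha_norm : ∀ t, 2 ≤ t → t ≤ N + 1 → ∀ᵐ ω ∂P, ∑ i, (a t ω i) ^ 2 = 1)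
    (hx_meas : ∀ t, 2 ≤ t → t ≤ N + 1 → Measurable[ℱ t] (x t))
    (hx_bound : ∀ t, 2 ≤ t → t ≤ N + 1 → ∀ᵐ ω ∂P, ∑ i, (x t ω i) ^ 2 ≤ B)
    (hε_meas : ∀ t, 2 ≤ t → t ≤ N + 1 → Measurable[ℱ t] (ε t))
    (hε_law : ∀ t, 2 ≤ t → t ≤ N + 1 → Measure.map (ε t) P = gaussianReal 0 1)
    (hε_indep : ∀ t, 2 ≤ t → t ≤ N + 1 →
      Indep (MeasurableSpace.comap (ε t) inferInstance)
        (ℱ (t - 1) ⊔ MeasurableSpace.comap (x t) inferInstance) P) :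
    ∫⁻ ω, ENNReal.ofReal (Real.exp (‖outerProductSum ε x a N ω‖ ^ 2 / (2 * B * (N + 1)))) ∂P ≤
      ENNReal.ofReal (Real.sqrt (N + 1)) := by
  have hW_meas : ∀ k ≤ N, Measurable[ℱ (k + 1)] (outerProductSum ε x a k) := fun k hk =>
    measurable_outerProductSum (fun t h2 ht => hε_meas t h2 (by omega))
      (fun t h2 ht => hx_meas t h2 (by omega)) (fun t h2 ht => ha_meas t h2 (by omega))
  refine lintegral_exp_norm_sq_le_sqrt hB N
    (𝒢 := fun k => ℱ (k + 1) ⊔ MeasurableSpace.comap (x (k + 2)) inferInstance)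
    (fun k hk => sup_le (ℱ.le _)
      ((hx_meas (k + 2) (by omega) (by omega)).mono (ℱ.le _) le_rfl).comap_le)
    (fun k hk => (hW_meas k hk.le).mono le_sup_left le_rfl)
    (fun k hk => measurable_outerProduct ((comap_measurable _).mono le_sup_right le_rfl)
      ((ha_meas (k + 2) (by omega) (by omega)).mono le_sup_left le_rfl))
    (fun k hk => hε_law (k + 2) (by omega) (by omega))
    (fun k hk => hε_indep (k + 2) (by omega) (by omega))
    (fun k hk => ?_) (fun ω => by simp [outerProductSum])
    (fun k hk ω => Finset.sum_Icc_succ_top (by omega) _)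
  filter_upwards [hx_bound (k + 2) (by omega) (by omega),
    ha_norm (k + 2) (by omega) (by omega)] with ω hx ha
  rwa [norm_outerProduct_sq, ha, mul_one]

/-- high-probability bound for the Frobenius norm of the adapted random matrix
`W_T = Σ_{t=2}^T ε_t x_t a_tᵀ`, where `a_t` is `F_{t−1}`-measurable with unit norm, `x_t` is
`F_t`-measurable with `‖x_t‖₂² ≤ B`, and conditionally on `σ(F_{t−1}, x_t)` the variable `ε_t`
is standard normal (encoded as: `ε_t ~ N(0,1)` and `ε_t` independent of `F_{t−1} ⊔ σ(x_t)`).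
Then `P(‖W_T‖_F ≥ s) ≤ T exp(−s²/(2TB))` for every `s > 0`. -/
theorem martingale_frobenius_tail {Ω : Type*} {mΩ : MeasurableSpace Ω}
    (P : Measure Ω) [IsProbabilityMeasure P]
    (T m n : ℕ) (hT : 2 ≤ T) (B : ℝ) (hB : 0 < B)
    (ℱ : Filtration ℕ mΩ)
    (a : ℕ → Ω → (Fin m → ℝ)) (x : ℕ → Ω → (Fin n → ℝ)) (ε : ℕ → Ω → ℝ)
    (ha_meas : ∀ t, 2 ≤ t → t ≤ T → Measurable[ℱ (t - 1)] (a t))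
    (ha_norm : ∀ t, 2 ≤ t → t ≤ T → ∀ᵐ ω ∂P, ∑ i, (a t ω i) ^ 2 = 1)
    (hx_meas : ∀ t, 2 ≤ t → t ≤ T → Measurable[ℱ t] (x t))
    (hx_bound : ∀ t, 2 ≤ t → t ≤ T → ∀ᵐ ω ∂P, ∑ i, (x t ω i) ^ 2 ≤ B)
    (hε_meas : ∀ t, 2 ≤ t → t ≤ T → Measurable[ℱ t] (ε t))
    (hε_law : ∀ t, 2 ≤ t → t ≤ T → Measure.map (ε t) P = gaussianReal 0 1)
    (hε_indep : ∀ t, 2 ≤ t → t ≤ T →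
      Indep (MeasurableSpace.comap (ε t) inferInstance)
        (ℱ (t - 1) ⊔ MeasurableSpace.comap (x t) inferInstance) P) :
    ∀ s : ℝ, 0 < s →
      P {ω | s ≤ Real.sqrt (∑ i : Fin n, ∑ j : Fin m,
            (∑ t ∈ Finset.Icc 2 T, ε t ω * x t ω i * a t ω j) ^ 2)}
        ≤ ENNReal.ofReal ((T : ℝ) * Real.exp (-s ^ 2 / (2 * T * B))) := by
  intro s hs
  obtain ⟨N, rfl⟩ : ∃ N, T = N + 1 := ⟨T - 1, by omega⟩
  simp_rw [← norm_outerProductSum]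
  have hW : AEMeasurable (outerProductSum ε x a N) P :=
    ((measurable_outerProductSum hε_meas hx_meas ha_meas).mono (ℱ.le _) le_rfl).aemeasurable
  have hmoment := lintegral_exp_norm_outerProductSum_sq_le N hB ℱ ha_meas ha_norm hx_meas
    hx_bound hε_meas hε_law hε_indep
  refine (measure_le_norm_le_exp_mul_lintegral (c := 2 * B * (N + 1)) hW hs.le
    (by positivity)).trans ((mul_le_mul_right hmoment _).trans ?_)
  have hsqrt : Real.sqrt (N + 1) ≤ N + 1 := Real.sqrt_le_self_iff.mpr (Or.inr (by simp))
  rw [← ENNReal.ofReal_mul (Real.exp_nonneg _), mul_comm, neg_div]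
  push_cast
  rw [show 2 * ((N : ℝ) + 1) * B = 2 * B * (N + 1) by ring]
  exact ENNReal.ofReal_le_ofReal (mul_le_mul_of_nonneg_right hsqrt (Real.exp_nonneg _))
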